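/- Let r = 2m+1 be odd and ℓ ∈ ℝ^r a generic length vector with nonnegative weakly increasing components. Then μ(ℓ) = m+1 if and only if ℓ is equivalent to (1,...,1), i.e., a subset J ⊆ {1,...,r} is ℓ-long if and only if #J ≥ m+1. -/

import Mathlib

open Finset

/-- `J` is `ℓ`-long if the sum of `ℓ` over `J` exceeds the sum over its complement. -/
def IsLong {r : ℕ} (ℓ : Fin r → ℝ) (J : Finset (Fin r)) : Prop :=
  ∑ j ∈ Jᶜ, ℓ j < ∑ j ∈ J, ℓ j

/-- `ℓ` is generic if no subset sum equals the complementary sum. -/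
def IsGeneric {r : ℕ} (ℓ : Fin r → ℝ) : Prop :=
  ∀ J : Finset (Fin r), ∑ j ∈ J, ℓ j ≠ ∑ j ∈ Jᶜ, ℓ j

open scoped Classical in
/-- `σ_ℓ(J)`: the number of `j ∈ J` such that `J \ {j}` is `ℓ`-short. -/
noncomputable def sigmaL {r : ℕ} (ℓ : Fin r → ℝ) (J : Finset (Fin r)) : ℕ :=
  (J.filter (fun j => ¬ IsLong ℓ (J.erase j))).card

/-- `μ(ℓ) = min { σ_ℓ(J) : J ℓ-long, σ_ℓ(J) > 0 }`. -/
noncomputable def muL {r : ℕ} (ℓ : Fin r → ℝ) : ℕ :=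
  sInf {n : ℕ | 0 < n ∧ ∃ J : Finset (Fin r), IsLong ℓ J ∧ sigmaL ℓ J = n}

/-! A long set `K` of minimal cardinality has `σ_ℓ(K) = #K`, since removing any element
makes it short; and since `ℓ` is generic, of a set of size `m + 1` and its complement of
size `m` one is long, so `#K ≤ m + 1`. Hence `μ(ℓ) = m + 1` forces the long sets to be exactly
those of size at least `m + 1`. Conversely, for that threshold `σ_ℓ(J)` of a long set `J` is
`m + 1` if `#J = m + 1` and `0` otherwise. -/

variable {r : ℕ} {ℓ : Fin r → ℝ}

lemma IsLong.not_compl {J : Finset (Fin r)} (h : IsLong ℓ J) : ¬ IsLong ℓ Jᶜ := by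
  unfold IsLong at *
  rw [compl_compl]
  exact h.le.not_gt

lemma IsGeneric.isLong_compl_iff (hg : IsGeneric ℓ) (J : Finset (Fin r)) :
    IsLong ℓ Jᶜ ↔ ¬ IsLong ℓ J := by
  refine ⟨fun h hJ => hJ.not_compl h, fun h => ?_⟩
  unfold IsLong at *
  rw [compl_compl]
  exact (not_lt.mp h).lt_of_ne (hg J)

lemma not_isLong_empty (hpos : ∀ j, 0 ≤ ℓ j) : ¬ IsLong ℓ ∅ := by
  simpa [IsLong] using sum_nonneg fun j _ => hpos j

lemma IsGeneric.exists_isLong_two_mul_card_le (hg : IsGeneric ℓ) :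
    ∃ J : Finset (Fin r), IsLong ℓ J ∧ 2 * J.card ≤ r + 1 := by
  obtain ⟨J, -, hJ⟩ := exists_subset_card_eq (s := (univ : Finset (Fin r)))
    (n := (r + 1) / 2) (by simp; omega)
  by_cases hlong : IsLong ℓ J
  · exact ⟨J, hlong, by omega⟩
  · refine ⟨Jᶜ, (hg.isLong_compl_iff J).mpr hlong, ?_⟩
    rw [card_compl, Fintype.card_fin]
    omega

lemma exists_isLong_card_minimal (h : ∃ J : Finset (Fin r), IsLong ℓ J) :
    ∃ K, IsLong ℓ K ∧ ∀ J, IsLong ℓ J → K.card ≤ J.card := by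
  classical
  obtain ⟨K, hK, hmin⟩ := exists_min_image (univ.filter (IsLong ℓ)) card
    (by simpa [Finset.Nonempty] using h)
  exact ⟨K, (mem_filter.mp hK).2, fun J hJ => hmin J (by simpa using hJ)⟩

lemma sigmaL_eq_card_of_forall_erase {J : Finset (Fin r)}
    (h : ∀ j ∈ J, ¬ IsLong ℓ (J.erase j)) : sigmaL ℓ J = J.card := by
  classical
  unfold sigmaL
  rw [filter_eq_self.mpr h]

lemma sigmaL_eq_zero_of_forall_erase {J : Finset (Fin r)}
    (h : ∀ j ∈ J, IsLong ℓ (J.erase j)) : sigmaL ℓ J = 0 := by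
  classical
  unfold sigmaL
  rw [filter_eq_empty_iff.mpr fun j hj => not_not.mpr (h j hj), card_empty]

lemma muL_le_sigmaL {J : Finset (Fin r)} (hJ : IsLong ℓ J) (hσ : 0 < sigmaL ℓ J) :
    muL ℓ ≤ sigmaL ℓ J :=
  Nat.sInf_le ⟨hσ, J, hJ, rfl⟩

lemma muL_le_card_of_minimal (hpos : ∀ j, 0 ≤ ℓ j) {K : Finset (Fin r)} (hK : IsLong ℓ K)
    (hmin : ∀ J, IsLong ℓ J → K.card ≤ J.card) : muL ℓ ≤ K.card := by
  have hσ : sigmaL ℓ K = K.card := sigmaL_eq_card_of_forall_erase fun j hj hlong => by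
    have := hmin _ hlong
    rw [card_erase_of_mem hj] at this
    have := card_pos.mpr ⟨j, hj⟩
    omega
  have hK₀ : 0 < K.card := card_pos.mpr <| nonempty_iff_ne_empty.mpr <| by
    rintro rfl
    exact not_isLong_empty hpos hK
  exact hσ ▸ muL_le_sigmaL hK (hσ ▸ hK₀)

lemma isLong_iff_of_forall_card_le {m : ℕ} (hr : r = 2 * m + 1) (hg : IsGeneric ℓ)
    (hmin : ∀ J, IsLong ℓ J → m + 1 ≤ J.card) (J : Finset (Fin r)) :
    IsLong ℓ J ↔ m + 1 ≤ J.card := by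
  refine ⟨hmin J, fun hJ => ?_⟩
  by_contra hshort
  have := hmin _ ((hg.isLong_compl_iff J).mpr hshort)
  have := J.card_le_univ
  rw [card_compl, Fintype.card_fin] at *
  omega

section Threshold

variable {n : ℕ} (h : ∀ J : Finset (Fin r), IsLong ℓ J ↔ n ≤ J.card)
include h

lemma sigmaL_eq_of_card_eq {J : Finset (Fin r)} (hJ : J.card = n) : sigmaL ℓ J = n :=
  hJ ▸ sigmaL_eq_card_of_forall_erase fun j hj hlong => by
    have := (h _).mp hlong
    rw [card_erase_of_mem hj, hJ] at this
    have : 0 < n := hJ ▸ card_pos.mpr ⟨j, hj⟩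
    omega

lemma sigmaL_eq_zero_of_lt_card {J : Finset (Fin r)} (hJ : n < J.card) : sigmaL ℓ J = 0 :=
  sigmaL_eq_zero_of_forall_erase fun j hj => (h _).mpr <| by
    rw [card_erase_of_mem hj]
    omega

lemma muL_eq_of_forall_isLong_iff (hn : 0 < n) (hnr : n ≤ r) : muL ℓ = n := by
  have hset : {k : ℕ | 0 < k ∧ ∃ J : Finset (Fin r), IsLong ℓ J ∧ sigmaL ℓ J = k} = {n} := by
    ext k
    simp only [Set.mem_ofPred_eq, Set.mem_singleton_iff]
    constructor
    · rintro ⟨hk, J, hJ, rfl⟩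
      rcases ((h J).mp hJ).eq_or_lt with hJn | hJn
      · exact sigmaL_eq_of_card_eq h hJn.symm
      · exact absurd (sigmaL_eq_zero_of_lt_card h hJn) hk.ne'
    · rintro rfl
      obtain ⟨J, -, hJ⟩ := exists_subset_card_eq (s := (univ : Finset (Fin r))) (n := k)
        (by simpa using hnr)
      exact ⟨hn, J, (h J).mpr hJ.ge, sigmaL_eq_of_card_eq h hJ⟩
  rw [muL, hset, csInf_singleton]

end Threshold

theorem mu_eq_succ_iff_equilateral_odd_general {r m : ℕ} (hr : r = 2 * m + 1)
    (ℓ : Fin r → ℝ) (hg : IsGeneric ℓ) (hpos : ∀ j, 0 ≤ ℓ j) :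
    muL ℓ = m + 1 ↔ ∀ J : Finset (Fin r), IsLong ℓ J ↔ m + 1 ≤ J.card := by
  refine ⟨fun hmu => ?_, fun h => muL_eq_of_forall_isLong_iff h m.succ_pos (by omega)⟩
  obtain ⟨J, hJ, hJcard⟩ := hg.exists_isLong_two_mul_card_le
  obtain ⟨K, hK, hmin⟩ := exists_isLong_card_minimal ⟨J, hJ⟩
  have hKm : K.card = m + 1 := by
    have := muL_le_card_of_minimal hpos hK hmin
    have := hmin J hJ
    omega
  exact isLong_iff_of_forall_card_le hr hg fun J hJ => hKm ▸ hmin J hJ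

theorem mu_eq_succ_iff_equilateral_odd {r m : ℕ} (hr : r = 2 * m + 1)
    (ℓ : Fin r → ℝ) (hg : IsGeneric ℓ) (hpos : ∀ j, 0 ≤ ℓ j)
    (hmono : Monotone ℓ) :
    muL ℓ = m + 1 ↔ ∀ J : Finset (Fin r), IsLong ℓ J ↔ m + 1 ≤ J.card :=
  mu_eq_succ_iff_equilateral_odd_general hr ℓ hg hpos
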